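/- Let x* ∈ ℝⁿ with ‖x*‖₀ ≤ s (s < n), and suppose the vectors {∇gᵢ(x*)}_{i ∈ 𝓘_g(x*)} ∪ {∇hᵢ(x*)}_{i=1}^p ∪ {eᵢ}_{i ∈ supp(x*)ᶜ} are linearly independent (CCOP-LICQ). Then CCOP-NNAMCQ holds at x*: there is no nonzero (λᵍ, λʰ, η) with λᵍᵢ ≥ 0 for i ∈ 𝓘_g(x*), ηᵢ = 0 for all i ∈ supp(x*), ‖η‖₀ ≤ n − s, satisfying Σ_{i ∈ 𝓘_g(x*)} λᵍᵢ ∇gᵢ(x*) + Σᵢ λʰᵢ ∇hᵢ(x*) + η = 0. -/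

import Mathlib

open Filter Topology Metric Set
open scoped Classical

noncomputable section

abbrev E (n : ℕ) := EuclideanSpace ℝ (Fin n)

/-- Bouligand tangent cone. -/
def bouligand {n : ℕ} (S : Set (E n)) (x : E n) : Set (E n) :=
  {d | ∃ t : ℕ → ℝ, ∃ dk : ℕ → E n,
    (∀ k, 0 < t k) ∧ Tendsto t atTop (𝓝 0) ∧ Tendsto dk atTop (𝓝 d) ∧
    ∀ k, x + t k • dk k ∈ S}

/-- Fréchet (regular) normal cone. -/
def frechetNormal {n : ℕ} (S : Set (E n)) (x : E n) : Set (E n) :=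
  {v | ∀ ε > (0 : ℝ), ∃ δ > (0 : ℝ), ∀ y ∈ S, ‖y - x‖ < δ →
    (inner ℝ v (y - x) : ℝ) ≤ ε * ‖y - x‖}

/-- Mordukhovich (limiting) normal cone. -/
def limitingNormal {n : ℕ} (S : Set (E n)) (x : E n) : Set (E n) :=
  {v | ∃ xk : ℕ → E n, ∃ vk : ℕ → E n,
    (∀ k, xk k ∈ S) ∧ Tendsto xk atTop (𝓝 x) ∧
    (∀ k, vk k ∈ frechetNormal S (xk k)) ∧ Tendsto vk atTop (𝓝 v)}

/-- Directional limiting normal cone. -/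
def dirLimitingNormal {n : ℕ} (S : Set (E n)) (x d : E n) : Set (E n) :=
  {v | ∃ t : ℕ → ℝ, ∃ dk : ℕ → E n, ∃ vk : ℕ → E n,
    (∀ k, 0 < t k) ∧ Tendsto t atTop (𝓝 0) ∧ Tendsto dk atTop (𝓝 d) ∧
    Tendsto vk atTop (𝓝 v) ∧ ∀ k, vk k ∈ frechetNormal S (x + t k • dk k)}

/-- Support of a vector. -/
def supp {n : ℕ} (x : E n) : Finset (Fin n) := Finset.univ.filter (fun i => x i ≠ 0)

/-- The ℓ₀ "norm": number of nonzero components. -/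
def l0 {n : ℕ} (x : E n) : ℕ := (supp x).card

/-- The sparsity set {x : ‖x‖₀ ≤ s}. -/
def sparseSet (n s : ℕ) : Set (E n) := {x | l0 x ≤ s}

/-- Coordinate subspace ℝ_I of vectors supported on I. -/
def coordSub {n : ℕ} (I : Finset (Fin n)) : Set (E n) := {x | ∀ i ∉ I, x i = 0}

theorem EuclideanSpace.eq_sum_smul_single_of_apply_eq_zero {ι 𝕜 : Type*} [Fintype ι]
    [DecidableEq ι] [RCLike 𝕜] {p : ι → Prop} [Fintype {i // p i}] (v : EuclideanSpace 𝕜 ι)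
    (hv : ∀ i, ¬ p i → v i = 0) :
    v = ∑ i : {i // p i}, v i • EuclideanSpace.single (i : ι) (1 : 𝕜) := calc
  v = ∑ i, v i • EuclideanSpace.single i (1 : 𝕜) := by
    simpa using ((EuclideanSpace.basisFun ι 𝕜).sum_repr v).symm
  _ = ∑ i ∈ Finset.univ.filter p, v i • EuclideanSpace.single i (1 : 𝕜) :=
    (Finset.sum_filter_of_ne fun i _ hi => by_contra fun hpi => hi (by simp [hv i hpi])).symm
  _ = ∑ i : {i // p i}, v i • EuclideanSpace.single (i : ι) (1 : 𝕜) :=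
    Finset.sum_subtype _ (by simp) _

theorem stmt16 {n s m p : ℕ}
    (g : Fin m → E n → ℝ) (h : Fin p → E n → ℝ)
    (x : E n)
    (licq : LinearIndependent ℝ
      (fun i : ({i : Fin m // g i x = 0} ⊕ Fin p ⊕ {i : Fin n // x i = 0}) =>
        match i with
        | Sum.inl i => gradient (g i.1) x
        | Sum.inr (Sum.inl i) => gradient (h i) x
        | Sum.inr (Sum.inr i) => (EuclideanSpace.single i.1 (1 : ℝ) : E n))) :
    ¬ ∃ (lg : {i : Fin m // g i x = 0} → ℝ) (lh : Fin p → ℝ) (η : E n),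
      (∀ i, 0 ≤ lg i) ∧
      (∀ i ∈ supp x, η i = 0) ∧ l0 η ≤ n - s ∧
      (∑ i, lg i • gradient (g i.1) x) + (∑ i, lh i • gradient (h i) x) + η = 0 ∧
      ¬ (lg = 0 ∧ lh = 0 ∧ η = 0) := by
  rintro ⟨lg, lh, η, -, hη_supp, -, hsum, hne⟩
  have hη : η = ∑ i : {i : Fin n // x i = 0}, η i • EuclideanSpace.single i.1 (1 : ℝ) :=
    EuclideanSpace.eq_sum_smul_single_of_apply_eq_zero η fun i hi =>
      hη_supp i (by simpa [supp] using hi)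
  have hcoeff :=
    Fintype.linearIndependent_iff.mp licq (Sum.elim lg (Sum.elim lh fun i => η i)) <| by
      rw [hη] at hsum
      simpa [Fintype.sum_sum_type, add_assoc] using hsum
  exact hne ⟨funext fun i => hcoeff (.inl i), funext fun i => hcoeff (.inr (.inl i)),
    hη.trans <| Fintype.sum_eq_zero _ fun i => smul_eq_zero_of_left (hcoeff (.inr (.inr i))) _⟩
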